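/- Suppose N > 2 is odd, Γ ≤ SL₂(ℤ) is a lift of the projective image of Γ(N) with Γ(2N) ≤ Γ and -I ∉ Γ. If A ∈ Γ reduces mod 2 to an element of odd order in SL₂(𝔽₂), then A ∈ Γ(N) (i.e., its sign relative to the canonical lift is +1). -/

import Mathlib

open Matrix CongruenceSubgroup
open scoped MatrixGroups

instance : (Subgroup.zpowers (-1 : SL(2, ℤ))).Normal where
  conj_mem := by
    intro x hx g
    obtain ⟨k, rfl⟩ := hx
    have h : g * (-1 : SL(2, ℤ)) ^ k * g⁻¹ = (-1 : SL(2, ℤ)) ^ k := by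
      rw [((Commute.neg_one_left g).zpow_left k).symm.eq, mul_inv_cancel_right]
    rw [h]
    exact Subgroup.zpow_mem _ (Subgroup.mem_zpowers _) k

/-- PSL₂(ℤ) = SL₂(ℤ)/{±I}. -/
abbrev PSL2Z := SL(2, ℤ) ⧸ Subgroup.zpowers (-1 : SL(2, ℤ))

/-- The canonical projection SL₂(ℤ) → PSL₂(ℤ). -/
def proj : SL(2, ℤ) →* PSL2Z := QuotientGroup.mk' _

/-- Reduction of SL₂(ℤ) modulo N. -/
def redMod (N : ℕ) : SL(2, ℤ) →* Matrix.SpecialLinearGroup (Fin 2) (ZMod N) :=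
  Matrix.SpecialLinearGroup.map (Int.castRingHom (ZMod N))

/-!
The image of `A` in PSL₂(ℤ) lies in the image of Γ(N), so `A` or `-A` lies in Γ(N). Suppose
`B = -A ∈ Γ(N)` and let `k` be the odd order of `A` mod 2. Then `B ^ k = -A ^ k` lies in Γ(N),
and also in Γ(2) because `A ^ k ≡ I` and `-I ≡ I` mod 2. As `N` is odd, `B ^ k ∈ Γ(2N) ≤ Γ`,
whence `-I = B ^ k * (A ^ k)⁻¹ ∈ Γ`.
-/

lemma mem_Gamma_iff_modEq {N : ℕ} {γ : SL(2, ℤ)} :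
    γ ∈ Gamma N ↔ ∀ i j, γ i j ≡ (1 : Matrix (Fin 2) (Fin 2) ℤ) i j [ZMOD N] := by
  rw [Gamma_mem', Matrix.SpecialLinearGroup.ext_iff]
  refine forall₂_congr fun i j => ?_
  rw [SL_reduction_mod_hom_val, ← ZMod.intCast_eq_intCast_iff]
  by_cases h : i = j <;> simp [Matrix.one_apply, h]

lemma Gamma_inf_Gamma_le_Gamma_mul {m n : ℕ} (hmn : m.Coprime n) :
    Gamma m ⊓ Gamma n ≤ Gamma (m * n) := by
  intro γ hγ
  obtain ⟨hm, hn⟩ := Subgroup.mem_inf.1 hγ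
  rw [mem_Gamma_iff_modEq] at hm hn ⊢
  intro i j
  exact_mod_cast (Int.modEq_and_modEq_iff_modEq_mul (m := m) (n := n) hmn).1 ⟨hm i j, hn i j⟩

lemma neg_one_mem_Gamma_two : (-1 : SL(2, ℤ)) ∈ Gamma 2 := by
  rw [Gamma_mem]
  decide

lemma pow_orderOf_redMod_mem_Gamma (N : ℕ) (A : SL(2, ℤ)) :
    A ^ orderOf (redMod N A) ∈ Gamma N :=
  Gamma_mem'.2 <| (map_pow (redMod N) A _).trans (pow_orderOf_eq_one _)

lemma eq_or_eq_neg_of_proj_eq {A B : SL(2, ℤ)} (h : proj B = proj A) : A = B ∨ A = -B := by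
  obtain ⟨z, ⟨m, rfl⟩, rfl⟩ := (QuotientGroup.mk'_eq_mk' _).1 h
  rcases Int.even_or_odd m with hm | hm <;> simp [hm.neg_one_zpow]

lemma neg_one_mem_of_neg_mem_Gamma {N : ℕ} (hN : Odd N) {Γ : Subgroup SL(2, ℤ)}
    (hsub : Gamma (2 * N) ≤ Γ) {A : SL(2, ℤ)} (hA : A ∈ Γ) (hnegA : -A ∈ Gamma N)
    (hord : Odd (orderOf (redMod 2 A))) : (-1 : SL(2, ℤ)) ∈ Γ := by
  set k := orderOf (redMod 2 A)
  have hneg2 : -A ^ k ∈ Gamma 2 := by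
    simpa using (Gamma 2).mul_mem neg_one_mem_Gamma_two (pow_orderOf_redMod_mem_Gamma 2 A)
  have hnegN : -A ^ k ∈ Gamma N := hord.neg_pow A ▸ (Gamma N).pow_mem hnegA k
  have hnegΓ : -A ^ k ∈ Γ :=
    hsub <| Gamma_inf_Gamma_le_Gamma_mul (Nat.coprime_two_left.2 hN) ⟨hneg2, hnegN⟩
  simpa using Γ.mul_mem hnegΓ (Γ.inv_mem (Γ.pow_mem hA k))

theorem sign_one_of_odd_order_mod_two_general (N : ℕ) (hodd : Odd N)
    (Γ : Subgroup SL(2, ℤ))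
    (hlift : Subgroup.map proj Γ = Subgroup.map proj (Gamma N))
    (hsub : Gamma (2 * N) ≤ Γ) (hneg : (-1 : SL(2, ℤ)) ∉ Γ)
    (A : SL(2, ℤ)) (hA : A ∈ Γ) (hord : Odd (orderOf (redMod 2 A))) :
    A ∈ Gamma N := by
  obtain ⟨B, hB, hBA⟩ : proj A ∈ Subgroup.map proj (Gamma N) :=
    hlift ▸ Subgroup.mem_map_of_mem proj hA
  rcases eq_or_eq_neg_of_proj_eq hBA with rfl | rfl
  · exact hB
  · exact absurd (neg_one_mem_of_neg_mem_Gamma hodd hsub hA (by rwa [neg_neg]) hord) hneg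

/-- Let N > 2 be odd and Γ a lift of the projective image of Γ(N) with
Γ(2N) ≤ Γ and -I ∉ Γ. If A ∈ Γ reduces mod 2 to an element of odd order in
SL₂(𝔽₂), then A ∈ Γ(N) (its sign relative to the canonical lift is +1). -/
theorem sign_one_of_odd_order_mod_two (N : ℕ) (hN : 2 < N) (hodd : Odd N)
    (Γ : Subgroup SL(2, ℤ))
    (hlift : Subgroup.map proj Γ = Subgroup.map proj (Gamma N))
    (hsub : Gamma (2 * N) ≤ Γ) (hneg : (-1 : SL(2, ℤ)) ∉ Γ)
    (A : SL(2, ℤ)) (hA : A ∈ Γ) (hord : Odd (orderOf (redMod 2 A))) :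
    A ∈ Gamma N :=
  sign_one_of_odd_order_mod_two_general N hodd Γ hlift hsub hneg A hA hord
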